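/- Let m ≥ 2, r_1,…,r_m ∈ ℝ^n, w_1,…,w_m ∈ ℝ. With p_j = max_i(r_{ji}+w_i) and q_j = min_i(r_{ji}−w_i), the objective F(x) = max_i(ρ(r_i,x)+w_i) can be rewritten as F(x) = max_{1≤j≤n} max( p_j − x_j, x_j − q_j ) for all x ∈ ℝ^n, where ρ is the Chebyshev distance. -/
import Mathlib


/-- Chebyshev (L∞) distance on ℝ^n. -/
noncomputable def cheb {n : ℕ} (hn : 0 < n) (r x : Fin n → ℝ) : ℝ :=
  Finset.univ.sup' (Finset.univ_nonempty_iff.mpr ⟨⟨0, hn⟩⟩) fun j => |r j - x j|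

theorem location_objective_separable {n m : ℕ} (hn : 0 < n) (hm : 2 ≤ m)
    (r : Fin m → Fin n → ℝ) (w : Fin m → ℝ) (p q : Fin n → ℝ)
    (hp : ∀ j, p j = Finset.univ.sup' (Finset.univ_nonempty_iff.mpr ⟨⟨0, by omega⟩⟩)
      (fun i => r i j + w i))
    (hq : ∀ j, q j = Finset.univ.inf' (Finset.univ_nonempty_iff.mpr ⟨⟨0, by omega⟩⟩)
      (fun i => r i j - w i)) :
    ∀ x : Fin n → ℝ,
      (Finset.univ.sup' (Finset.univ_nonempty_iff.mpr ⟨⟨0, by omega⟩⟩)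
        fun i => cheb hn (r i) x + w i) =
      Finset.univ.sup' (Finset.univ_nonempty_iff.mpr ⟨⟨0, hn⟩⟩)
        (fun j => max (p j - x j) (x j - q j)) := by
  intro x
  apply le_antisymm
  · apply Finset.sup'_le
    intro i _
    obtain ⟨j0, _, hj0⟩ := Finset.exists_mem_eq_sup' (Finset.univ_nonempty_iff.mpr ⟨⟨0, hn⟩⟩)
      (fun j => |r i j - x j|)
    have hc : cheb hn (r i) x = |r i j0 - x j0| := hj0
    refine le_trans ?_ (Finset.le_sup' (fun j => max (p j - x j) (x j - q j)) (Finset.mem_univ j0))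
    rw [hc]
    have hpj : r i j0 + w i ≤ p j0 := by
      rw [hp]; exact Finset.le_sup' (fun i => r i j0 + w i) (Finset.mem_univ i)
    have hqj : q j0 ≤ r i j0 - w i := by
      rw [hq]; exact Finset.inf'_le (fun i => r i j0 - w i) (Finset.mem_univ i)
    rcases abs_cases (r i j0 - x j0) with ⟨h, _⟩ | ⟨h, _⟩
    · rw [h]
      exact le_max_of_le_left (by linarith)
    · rw [h]
      exact le_max_of_le_right (by linarith)
  · apply Finset.sup'_le
    intro j _
    apply max_le
    · obtain ⟨i0, _, hi0⟩ := Finset.exists_mem_eq_sup'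
        (Finset.univ_nonempty_iff.mpr (⟨⟨0, by omega⟩⟩ : Nonempty (Fin m)))
        (fun i => r i j + w i)
      refine le_trans ?_ (Finset.le_sup' _ (Finset.mem_univ i0))
      have hcb : |r i0 j - x j| ≤ cheb hn (r i0) x :=
        Finset.le_sup' (fun j => |r i0 j - x j|) (Finset.mem_univ j)
      have : r i0 j - x j ≤ |r i0 j - x j| := le_abs_self _
      rw [hp, hi0]
      linarith
    · obtain ⟨i1, _, hi1⟩ := Finset.exists_mem_eq_inf'
        (Finset.univ_nonempty_iff.mpr (⟨⟨0, by omega⟩⟩ : Nonempty (Fin m)))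
        (fun i => r i j - w i)
      refine le_trans ?_ (Finset.le_sup' _ (Finset.mem_univ i1))
      have hcb : |r i1 j - x j| ≤ cheb hn (r i1) x :=
        Finset.le_sup' (fun j => |r i1 j - x j|) (Finset.mem_univ j)
      have h2 : x j - r i1 j ≤ |r i1 j - x j| := by
        rw [abs_sub_comm]; exact le_abs_self _
      rw [hq, hi1]
      linarith
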